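/- arXiv:0909.2550 — 6 statements merged into one kernel-verified Lean document; each statement's English description precedes it below -/
import Mathlib

section
/- If p : ℝ → ℝ satisfies the Riccati equation p' + p² - 1 = 0 with p(0) = 0, then p(s) = tanh(s) for all s. Consequently the generating curve of an invariant surface in Sol with intrinsic Gaussian curvature K_int = -1 (and cos θ not identically zero) is the graph of z(y) = log(cosh y). -/
/-!
Writing `p = tanh + u / cosh`, i.e. `u = p cosh - sinh`, turns the Riccati equation
`p' = 1 - p²` into the linear equation `u' = -p u`; since `u 0 = 0`, the integrating factor
`exp (∫ p)` forces `u = 0`, so `p = tanh`. Then `z' = tanh` gives `z = log cosh`, and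
`y' = cosh s · (cosh s)⁻¹ = 1` gives `y = id`.
-/

open Real

section LinearODE

variable {E : Type*} [NormedAddCommGroup E] [NormedSpace ℝ E]

theorem eq_of_hasDerivAt_eq {f g f' : ℝ → E} (hf : ∀ t, HasDerivAt f (f' t) t)
    (hg : ∀ t, HasDerivAt g (f' t) t) (t₀ : ℝ) (h : f t₀ = g t₀) : f = g :=
  eq_of_fderiv_eq (fun t ↦ (hf t).differentiableAt) (fun t ↦ (hg t).differentiableAt)
    (fun t ↦ by rw [(hf t).hasFDerivAt.fderiv, (hg t).hasFDerivAt.fderiv]) t₀ h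

theorem eq_zero_of_hasDerivAt_smul_self {u : ℝ → E} {g : ℝ → ℝ} (hg : Continuous g)
    (hu : ∀ t, HasDerivAt u (g t • u t) t) (t₀ : ℝ) (h₀ : u t₀ = 0) : u = 0 := by
  set G : ℝ → ℝ := fun t ↦ ∫ x in t₀..t, g x
  have hG : ∀ t, HasDerivAt G (g t) t := fun t ↦ (hg.integral_hasStrictDerivAt t₀ t).hasDerivAt
  have hconst : (fun t ↦ exp (-G t) • u t) = fun _ ↦ 0 := by
    refine eq_of_hasDerivAt_eq (f' := fun _ ↦ 0) (fun t ↦ ?_) (fun t ↦ hasDerivAt_const t 0) t₀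
      (by simp [h₀])
    refine (((hG t).neg.exp).smul (hu t)).congr_deriv ?_
    rw [smul_smul, ← add_smul]
    simp
  funext t
  simpa [(exp_pos _).ne'] using congrFun hconst t

end LinearODE

theorem eq_tanh_of_hasDerivAt_one_sub_sq {p : ℝ → ℝ} (hp : ∀ s, HasDerivAt p (1 - p s ^ 2) s)
    (h₀ : p 0 = 0) : p = tanh := by
  set u : ℝ → ℝ := fun s ↦ p s * cosh s - sinh s
  have hu : ∀ s, HasDerivAt u (-p s • u s) s := fun s ↦
    (((hp s).mul (hasDerivAt_cosh s)).sub (hasDerivAt_sinh s)).congr_deriv (by simp only [u, smul_eq_mul]; ring)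
  have hpc : Continuous fun s ↦ -p s :=
    (continuous_iff_continuousAt.mpr fun s ↦ (hp s).continuousAt).neg
  have hu0 := eq_zero_of_hasDerivAt_smul_self hpc hu 0 (by simp [u, h₀])
  funext s
  rw [tanh_eq_sinh_div_cosh, eq_div_iff (cosh_pos s).ne']
  simpa [u, sub_eq_zero] using congrFun hu0 s

theorem Real.hasDerivAt_log_cosh (x : ℝ) : HasDerivAt (fun t ↦ log (cosh t)) (tanh x) x := by
  simpa [tanh_eq_sinh_div_cosh] using (hasDerivAt_cosh x).log (cosh_pos x).ne'

theorem Real.sqrt_one_sub_tanh_sq (x : ℝ) : √(1 - tanh x ^ 2) = (cosh x)⁻¹ := by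
  have hc := cosh_pos x
  rw [← sqrt_sq (inv_pos.mpr hc).le, tanh_eq_sinh_div_cosh]
  congr 1
  field_simp
  linarith [cosh_sq x]

theorem stmt_3 (p : ℝ → ℝ) (hp : ∀ s, HasDerivAt p (1 - p s ^ 2) s) (h0 : p 0 = 0) :
    (∀ s, p s = tanh s) ∧
    ∀ (z y : ℝ → ℝ),
      (∀ s, HasDerivAt z (p s) s) → z 0 = 0 →
      (∀ s, HasDerivAt y (exp (z s) * sqrt (1 - p s ^ 2)) s) → y 0 = 0 →
      ∀ s, z s = log (cosh (y s)) := by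
  have hp_eq := eq_tanh_of_hasDerivAt_one_sub_sq hp h0
  subst hp_eq
  refine ⟨fun _ ↦ rfl, fun z y hz hz0 hy hy0 s ↦ ?_⟩
  have hz_eq : z = fun t ↦ log (cosh t) :=
    eq_of_hasDerivAt_eq hz hasDerivAt_log_cosh 0 (by simp [hz0])
  have hy_eq : y = id := by
    refine eq_of_hasDerivAt_eq (f' := fun _ ↦ 1) (fun t ↦ ?_) hasDerivAt_id 0 hy0
    simpa [hz_eq, exp_log (cosh_pos t), sqrt_one_sub_tanh_sq, (cosh_pos t).ne'] using hy t
  rw [hz_eq, hy_eq, id]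
end

section
/- The functions z(s) = log s and y(s) = (1/2)(s·√(s²-1) - log(s + √(s²-1))), defined for s ≥ 1, satisfy z'(s) = sin θ(s) and y'(s) = e^{z(s)} cos θ(s) where sin θ(s) = 1/s, and sin θ satisfies the equation (sin θ)' + sin²θ = 0. Hence the corresponding invariant surface in Sol has intrinsic Gaussian curvature K_int = 0. -/
/-!
Since `exp (log s) = s` and `√(1 - 1/s²) = √(s² - 1) / s` for `s > 0`, the required derivative of
`y` is simply `√(s² - 1)`. Differentiating, with `u = √(s² - 1)` and `u' = s / u`, the logarithmic
term contributes `(1 + s/u) / (s + u) = 1/u`, so `2 y' = u + s²/u - 1/u = 2u`. The relation for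
`p = 1/s` is `(1/s)' = -1/s²`, and `(sin θ)' + sin² θ = 0` is then immediate.
-/

open Real

lemma hasDerivAt_sqrt_sq_sub_one {s : ℝ} (hs : s ^ 2 - 1 ≠ 0) :
    HasDerivAt (fun x => √(x ^ 2 - 1)) (s / √(s ^ 2 - 1)) s := by
  refine (((hasDerivAt_pow 2 s).sub_const 1).sqrt hs).congr_deriv ?_
  field_simp
  ring

lemma hasDerivAt_half_mul_sub_log_add_sqrt {s : ℝ} (hs : 1 < s ^ 2) :
    HasDerivAt (fun x => (1 / 2) * (x * √(x ^ 2 - 1) - log (x + √(x ^ 2 - 1))))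
      (√(s ^ 2 - 1)) s := by
  have hu2 : √(s ^ 2 - 1) ^ 2 = s ^ 2 - 1 := sq_sqrt (by linarith)
  have hu0 : √(s ^ 2 - 1) ≠ 0 := (sqrt_pos.mpr (by linarith)).ne'
  have hsu : s + √(s ^ 2 - 1) ≠ 0 := by
    intro h
    rw [show √(s ^ 2 - 1) = -s by linarith] at hu2
    linarith
  have hroot := hasDerivAt_sqrt_sq_sub_one (s := s) (by linarith)
  have hsum : HasDerivAt (fun x => x + √(x ^ 2 - 1)) (1 + s / √(s ^ 2 - 1)) s :=
    (hasDerivAt_id' s).add hroot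
  refine (((hasDerivAt_id' s).mul hroot).sub (hsum.log hsu)).const_mul (1 / 2) |>.congr_deriv ?_
  field_simp
  linear_combination (-(s + √(s ^ 2 - 1))) * hu2

lemma exp_log_mul_sqrt_one_sub_inv_sq {s : ℝ} (hs : 0 < s) :
    exp (log s) * √(1 - (1 / s) ^ 2) = √(s ^ 2 - 1) := by
  rw [exp_log hs, show 1 - (1 / s) ^ 2 = (s ^ 2 - 1) / s ^ 2 by field_simp,
    sqrt_div' _ (sq_nonneg s), sqrt_sq hs.le, mul_div_cancel₀ _ hs.ne']

theorem stmt_4 (z y p : ℝ → ℝ)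
    (hz : ∀ s, z s = log s)
    (hy : ∀ s, y s = (1/2) * (s * sqrt (s^2 - 1) - log (s + sqrt (s^2 - 1))))
    (hp : ∀ s, p s = 1 / s) :
    ∀ s ∈ Set.Ioi (1:ℝ),
      HasDerivAt z (p s) s ∧
      HasDerivAt y (exp (z s) * sqrt (1 - p s ^ 2)) s ∧
      HasDerivAt p (-(p s ^ 2)) s ∧
      (-(-(p s ^ 2)) - p s ^ 2 = 0) := by
  obtain rfl : z = log := funext hz
  obtain rfl : y = _ := funext hy
  obtain rfl : p = fun s => 1 / s := funext hp
  intro s (hs : 1 < s)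
  have hs0 : 0 < s := one_pos.trans hs
  refine ⟨?_, ?_, ?_, by ring⟩
  · simpa [one_div] using hasDerivAt_log hs0.ne'
  · rw [exp_log_mul_sqrt_one_sub_inv_sq hs0]
    exact hasDerivAt_half_mul_sub_log_add_sqrt (by nlinarith)
  · simpa [one_div, inv_pow] using hasDerivAt_inv hs0.ne'
end

section
/- Let c ∈ (-1, 0) and let p(s) = √(-c)·tanh(√(-c)·s), a solution of p' + p² + c = 0 with p(0) = 0. If z' = p and y' = e^z·√(1 - p²), then z(s) = (1/√(-c))·log(cosh(√(-c)s)) has a unique critical point at s = 0 which is a strict minimum, and |y'(s)| ≥ √(1 + c) > 0 for all s, so y is an unbounded strictly monotone function defined on all of ℝ. -/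
/-!
With `a = √(-c)` one has `z = log (cosh (a s))`, so `exp z = cosh (a s) ≥ 1`, and
`1 - p² = 1 + c tanh² (a s) ≥ 1 + c`. Hence `y' ≥ √(1 + c) > 0`, and a derivative bounded below
by a positive constant makes `y` strictly increasing with at least linear growth in both
directions.
-/

open Real Filter

namespace Real

theorem hasDerivAt_tanh (x : ℝ) : HasDerivAt tanh (1 - tanh x ^ 2) x := by
  have h := (hasDerivAt_sinh x).div (hasDerivAt_cosh x) (cosh_pos x).ne'
  rw [show sinh / cosh = tanh from funext fun t => (tanh_eq_sinh_div_cosh t).symm] at h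
  refine h.congr_deriv ?_
  rw [tanh_eq_sinh_div_cosh]
  field_simp

theorem tanh_eq_zero_iff {x : ℝ} : tanh x = 0 ↔ x = 0 :=
  tanh_injective.eq_iff' tanh_zero

theorem log_cosh_pos {x : ℝ} (hx : x ≠ 0) : 0 < log (cosh x) :=
  log_pos (one_lt_cosh.mpr hx)

end Real

theorem hasDerivAt_mul_tanh_mul (a s : ℝ) :
    HasDerivAt (fun t => a * tanh (a * t)) (a ^ 2 - (a * tanh (a * s)) ^ 2) s := by
  have h := ((hasDerivAt_tanh (a * s)).comp s ((hasDerivAt_id s).const_mul a)).const_mul a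
  refine h.congr_deriv ?_
  simp only [mul_one]
  ring

theorem hasDerivAt_log_cosh_mul (a s : ℝ) :
    HasDerivAt (fun t => log (cosh (a * t))) (a * tanh (a * s)) s := by
  have h := ((hasDerivAt_cosh (a * s)).comp s ((hasDerivAt_id' s).const_mul a)).log
    (cosh_pos _).ne'
  refine h.congr_deriv ?_
  simp only [Function.comp, mul_one, tanh_eq_sinh_div_cosh]
  ring

theorem sqrt_one_add_le_cosh_mul_sqrt_one_add_mul_tanh_sq {c : ℝ} (hc : c ≤ 0) (x : ℝ) :
    √(1 + c) ≤ cosh x * √(1 + c * tanh x ^ 2) := calc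
  √(1 + c) ≤ √(1 + c * tanh x ^ 2) := by
    gcongr
    nlinarith [tanh_sq_lt_one x]
  _ ≤ cosh x * √(1 + c * tanh x ^ 2) := le_mul_of_one_le_left (sqrt_nonneg _) (one_le_cosh x)

section LowerBoundedDeriv

variable {f : ℝ → ℝ} {m : ℝ}

theorem tendsto_atTop_of_le_deriv (hf : Differentiable ℝ f) (hm : 0 < m)
    (hf' : ∀ x, m ≤ deriv f x) : Tendsto f atTop atTop := by
  refine tendsto_atTop_mono' _ ?_
    (tendsto_atTop_add_const_left _ (f 0) (tendsto_id.const_mul_atTop hm))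
  filter_upwards [eventually_ge_atTop 0] with x hx
  rw [id]
  linarith [mul_sub_le_image_sub_of_le_deriv hf hf' hx]

theorem tendsto_atBot_of_le_deriv (hf : Differentiable ℝ f) (hm : 0 < m)
    (hf' : ∀ x, m ≤ deriv f x) : Tendsto f atBot atBot := by
  refine tendsto_atBot_mono' _ ?_
    (tendsto_atBot_add_const_left _ (f 0) (tendsto_id.const_mul_atBot hm))
  filter_upwards [eventually_le_atBot 0] with x hx
  rw [id]
  linarith [mul_sub_le_image_sub_of_le_deriv hf hf' hx]

end LowerBoundedDeriv

theorem stmt_5 (c : ℝ) (hc : c ∈ Set.Ioo (-1 : ℝ) 0)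
    (p : ℝ → ℝ) (hp : ∀ s, p s = sqrt (-c) * tanh (sqrt (-c) * s)) :
    (∀ s, HasDerivAt p (-(p s ^ 2) - c) s) ∧ p 0 = 0 ∧
    ∀ (z : ℝ → ℝ), (∀ s, HasDerivAt z (p s) s) → z 0 = 0 →
      (∀ s, z s = log (cosh (sqrt (-c) * s))) ∧
      (∀ s, (p s = 0 ↔ s = 0)) ∧
      (∀ s, s ≠ 0 → z 0 < z s) ∧
      ∀ (y : ℝ → ℝ), (∀ s, HasDerivAt y (exp (z s) * sqrt (1 - p s ^ 2)) s) →
        (∀ s, sqrt (1 + c) ≤ |exp (z s) * sqrt (1 - p s ^ 2)|) ∧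
        StrictMono y ∧ ¬ BddAbove (Set.range y) ∧ ¬ BddBelow (Set.range y) := by
  obtain ⟨hc1, hc0⟩ := hc
  set a := √(-c)
  have ha : a ^ 2 = -c := sq_sqrt (by linarith)
  have ha0 : 0 < a := sqrt_pos.mpr (by linarith)
  have hp' : p = fun t => a * tanh (a * t) := funext hp
  refine ⟨fun s => ?_, by simp [hp], fun z hz hz0 => ?_⟩
  · simp only [hp']
    exact (hasDerivAt_mul_tanh_mul a s).congr_deriv (by rw [ha]; ring)
  have hz' : z = fun t => log (cosh (a * t)) := by
    refine eq_of_fderiv_eq (𝕜 := ℝ) (fun s => (hz s).differentiableAt)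
      (fun s => (hasDerivAt_log_cosh_mul a s).differentiableAt) (fun s => ?_) 0 (by simp [hz0])
    rw [(hz s).hasFDerivAt.fderiv, (hasDerivAt_log_cosh_mul a s).hasFDerivAt.fderiv, hp]
  have hzmin : ∀ s, s ≠ 0 → z 0 < z s := fun s hs => by
    simpa [hz'] using log_cosh_pos (mul_ne_zero ha0.ne' hs)
  refine ⟨fun s => by rw [hz'], fun s => by simp [hp, ha0.ne', tanh_eq_zero_iff], hzmin,
    fun y hy => ?_⟩
  have hlow : ∀ s, √(1 + c) ≤ exp (z s) * √(1 - p s ^ 2) := fun s => by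
    rw [hz', exp_log (cosh_pos _), hp, mul_pow, ha]
    simpa [neg_mul, sub_neg_eq_add] using
      sqrt_one_add_le_cosh_mul_sqrt_one_add_mul_tanh_sq hc0.le (a * s)
  have hy' : ∀ s, √(1 + c) ≤ deriv y s := fun s => (hy s).deriv ▸ hlow s
  have hy_diff : Differentiable ℝ y := fun s => (hy s).differentiableAt
  have hpos : 0 < √(1 + c) := sqrt_pos.mpr (by linarith)
  exact ⟨fun s => (hlow s).trans (le_abs_self _),
    strictMono_of_deriv_pos fun s => hpos.trans_le (hy' s),
    not_bddAbove_of_tendsto_atTop (tendsto_atTop_of_le_deriv hy_diff hpos hy'),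
    not_bddBelow_of_tendsto_atBot (tendsto_atBot_of_le_deriv hy_diff hpos hy')⟩
end

section
/- Let c ∈ (-1, 0) and p(s) = -√(c+1)·tanh(√(c+1)·s), a solution of p' = p² - (c+1) with p(0) = 0. Then the function z with z' = p, z(0) = 0 equals z(s) = -log(cosh(√(c+1)s)), z has a unique maximum at s = 0, and the improper integral ∫₀^∞ e^{z(t)}√(1 - p(t)²) dt is finite. Hence y(s) = ∫₀ˢ e^{z}√(1-p²) is bounded on ℝ while z(s) → -∞ as s → ±∞. -/
open Real

private lemma tanh_hasDerivAt (x : ℝ) : HasDerivAt Real.tanh (1 - Real.tanh x ^ 2) x := by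
  have hc := Real.cosh_pos x
  have h := (Real.hasDerivAt_sinh x).div (Real.hasDerivAt_cosh x) hc.ne'
  have he : Real.tanh = fun x => Real.sinh x / Real.cosh x :=
    funext fun x => Real.tanh_eq_sinh_div_cosh x
  rw [he]
  refine h.congr_deriv ?_
  beta_reduce
  have := Real.cosh_sq_sub_sinh_sq x
  field_simp

private lemma cosh_tendsto_atTop : Filter.Tendsto Real.cosh Filter.atTop Filter.atTop := by
  apply Filter.tendsto_atTop_mono (fun x => ?_) (Real.tendsto_exp_atTop.atTop_div_const two_pos)
  rw [Real.cosh_eq]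
  have := Real.exp_pos (-x)
  linarith

theorem stmt_12 (c : ℝ) (hc : c ∈ Set.Ioo (-1 : ℝ) 0) (p : ℝ → ℝ)
    (hp : ∀ s, p s = - sqrt (c + 1) * tanh (sqrt (c + 1) * s)) :
    (∀ s, HasDerivAt p (p s ^ 2 - (c + 1)) s) ∧ p 0 = 0 ∧
    ∀ (z : ℝ → ℝ), (∀ s, HasDerivAt z (p s) s) → z 0 = 0 →
      (∀ s, z s = - log (cosh (sqrt (c + 1) * s))) ∧
      (∀ s, s ≠ 0 → z s < z 0) ∧
      MeasureTheory.IntegrableOn (fun t => exp (z t) * sqrt (1 - p t ^ 2)) (Set.Ici 0) ∧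
      (∃ C, ∀ s, |∫ t in (0:ℝ)..s, exp (z t) * sqrt (1 - p t ^ 2)| ≤ C) ∧
      Filter.Tendsto z Filter.atTop Filter.atBot ∧
      Filter.Tendsto z Filter.atBot Filter.atBot := by
  obtain ⟨hc1, hc0⟩ := hc
  set a : ℝ := sqrt (c + 1) with ha_def
  have h1 : (0:ℝ) < c + 1 := by linarith
  have ha : 0 < a := Real.sqrt_pos.2 h1
  have ha2 : a ^ 2 = c + 1 := Real.sq_sqrt h1.le
  have hpe : p = fun s => -a * Real.tanh (a * s) := funext hp
  -- derivative of p
  have hpd : ∀ s, HasDerivAt p (p s ^ 2 - (c + 1)) s := by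
    intro s
    have hin : HasDerivAt (fun s : ℝ => a * s) a s := by
      simpa using (hasDerivAt_id s).const_mul a
    have h := ((tanh_hasDerivAt (a * s)).comp s hin).const_mul (-a)
    rw [hpe]
    refine h.congr_deriv ?_
    beta_reduce
    rw [← ha2]
    ring
  refine ⟨hpd, by rw [hp]; simp, ?_⟩
  intro z hz hz0
  -- the explicit formula for z
  have hwd : ∀ s, HasDerivAt (fun s => - log (cosh (a * s))) (p s) s := by
    intro s
    have hin : HasDerivAt (fun s : ℝ => a * s) a s := by
      simpa using (hasDerivAt_id s).const_mul a
    have hcosh : HasDerivAt (fun s : ℝ => Real.cosh (a * s)) (Real.sinh (a * s) * a) s :=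
      (Real.hasDerivAt_cosh (a * s)).comp s hin
    have hlog : HasDerivAt (fun s : ℝ => Real.log (Real.cosh (a * s)))
        ((Real.cosh (a * s))⁻¹ * (Real.sinh (a * s) * a)) s :=
      by have h := (Real.hasDerivAt_log (Real.cosh_pos (a * s)).ne').comp s hcosh; exact h
    have : HasDerivAt (fun s => -Real.log (Real.cosh (a * s)))
        (-((Real.cosh (a * s))⁻¹ * (Real.sinh (a * s) * a))) s := hlog.neg
    convert this using 1
    rw [hp s, Real.tanh_eq_sinh_div_cosh, div_eq_mul_inv]
    ring
  have hzw : ∀ s, z s = - log (cosh (a * s)) := by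
    intro s
    have hg : ∀ x, HasDerivAt (fun s => z s - (- log (cosh (a * s)))) 0 x := by
      intro x
      exact ((hz x).sub (hwd x)).congr_deriv (sub_self _)
    have hconst : z s - (- log (cosh (a * s))) = z 0 - (- log (cosh (a * 0))) :=
      is_const_of_deriv_eq_zero (fun x => (hg x).differentiableAt)
        (fun x => (hg x).deriv) s 0
    have : z 0 - (- log (cosh (a * 0))) = 0 := by
      rw [hz0]; simp
    linarith [hconst, this]
  refine ⟨hzw, ?_, ?_⟩
  · -- strict max at 0
    intro s hs
    rw [hzw s, hz0]
    have : 1 < Real.cosh (a * s) := Real.one_lt_cosh.2 (by positivity)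
    have := Real.log_pos this
    linarith
  -- preliminaries for integrability
  set f : ℝ → ℝ := fun t => exp (z t) * sqrt (1 - p t ^ 2) with hf_def
  have hfnonneg : ∀ t, 0 ≤ f t := fun t =>
    mul_nonneg (Real.exp_pos _).le (Real.sqrt_nonneg _)
  have hzc : Continuous z := by
    rw [continuous_iff_continuousAt]; exact fun x => (hz x).continuousAt
  have hpc : Continuous p := by
    rw [continuous_iff_continuousAt]; exact fun x => (hpd x).continuousAt
  have hfc : Continuous f :=
    (Real.continuous_exp.comp hzc).mul ((continuous_const.sub (hpc.pow 2)).sqrt)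
  have hexpz : ∀ t, exp (z t) = (Real.cosh (a * t))⁻¹ := by
    intro t
    rw [hzw t, Real.exp_neg, Real.exp_log (Real.cosh_pos _)]
  have hbound : ∀ t, f t ≤ 2 * exp (-a * t) := by
    intro t
    have hs1 : sqrt (1 - p t ^ 2) ≤ 1 :=
      Real.sqrt_le_one.mpr (by nlinarith [sq_nonneg (p t)])
    have hcosh_ge : exp (a * t) / 2 ≤ Real.cosh (a * t) := by
      rw [Real.cosh_eq]
      have := Real.exp_pos (-(a * t))
      linarith
    have h2 : (Real.cosh (a * t))⁻¹ ≤ 2 * exp (-a * t) := by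
      have hi := inv_anti₀ (by positivity : (0:ℝ) < exp (a * t) / 2) hcosh_ge
      calc (Real.cosh (a * t))⁻¹ ≤ (exp (a * t) / 2)⁻¹ := hi
        _ = 2 * exp (-a * t) := by
            rw [neg_mul, Real.exp_neg]; field_simp
    calc f t ≤ exp (z t) * 1 := mul_le_mul_of_nonneg_left hs1 (Real.exp_pos _).le
      _ = (Real.cosh (a * t))⁻¹ := by rw [hexpz t, mul_one]
      _ ≤ 2 * exp (-a * t) := h2
  have hgint : MeasureTheory.IntegrableOn (fun t => 2 * exp (-a * t)) (Set.Ici 0) := by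
    rw [integrableOn_Ici_iff_integrableOn_Ioi]
    exact (exp_neg_integrableOn_Ioi 0 ha).const_mul 2
  have hfint : MeasureTheory.IntegrableOn f (Set.Ici 0) := by
    apply MeasureTheory.Integrable.mono' hgint
      hfc.aestronglyMeasurable.restrict
    filter_upwards with t
    rw [Real.norm_of_nonneg (hfnonneg t)]
    exact hbound t
  refine ⟨hfint, ?_, ?_, ?_⟩
  · -- bounded primitive
    have hfintIoi : MeasureTheory.IntegrableOn f (Set.Ioi 0) :=
      hfint.mono_set Set.Ioi_subset_Ici_self
    refine ⟨∫ t in Set.Ioi (0:ℝ), f t, ?_⟩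
    have key : ∀ s, 0 ≤ s → |∫ t in (0:ℝ)..s, f t| ≤ ∫ t in Set.Ioi (0:ℝ), f t := by
      intro s hs
      rw [intervalIntegral.integral_of_le hs,
        abs_of_nonneg (MeasureTheory.setIntegral_nonneg measurableSet_Ioc
          fun t _ => hfnonneg t)]
      exact MeasureTheory.setIntegral_mono_set hfintIoi
        (Filter.Eventually.of_forall hfnonneg)
        (Set.Ioc_subset_Ioi_self).eventuallyLE
    intro s
    rcases le_or_gt 0 s with hs | hs
    · exact key s hs
    · have hfeven : ∀ t, f (-t) = f t := by
        intro t
        simp only [hf_def, hzw, hp, mul_neg, Real.cosh_neg, Real.tanh_neg]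
        ring_nf
      have hcomp : (∫ x in (0:ℝ)..(-s), f (-x)) = ∫ x in s..(0:ℝ), f x := by
        simpa using intervalIntegral.integral_comp_neg (a := (0:ℝ)) (b := -s) (f := f)
      have heq : (∫ t in (0:ℝ)..(-s), f t) = - ∫ t in (0:ℝ)..s, f t := by
        rw [← intervalIntegral.integral_symm]
        rw [← hcomp]
        exact intervalIntegral.integral_congr fun x _ => (hfeven x).symm
      have := key (-s) (by linarith)
      rw [heq, abs_neg] at this
      exact this
  · -- tendsto atTop
    have hmul : Filter.Tendsto (fun s : ℝ => a * s) Filter.atTop Filter.atTop :=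
      Filter.Tendsto.const_mul_atTop ha Filter.tendsto_id
    have hlog : Filter.Tendsto (fun s : ℝ => log (cosh (a * s))) Filter.atTop Filter.atTop :=
      Real.tendsto_log_atTop.comp (cosh_tendsto_atTop.comp hmul)
    have : Filter.Tendsto (fun s : ℝ => - log (cosh (a * s))) Filter.atTop Filter.atBot :=
      Filter.tendsto_neg_atTop_atBot.comp hlog
    exact this.congr fun s => (hzw s).symm
  · -- tendsto atBot
    have hmul : Filter.Tendsto (fun s : ℝ => a * s) Filter.atBot Filter.atBot :=
      Filter.Tendsto.const_mul_atBot ha Filter.tendsto_id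
    have hcoshBot : Filter.Tendsto Real.cosh Filter.atBot Filter.atTop := by
      have := cosh_tendsto_atTop.comp Filter.tendsto_neg_atBot_atTop
      exact this.congr fun x => by simp [Real.cosh_neg]
    have hlog : Filter.Tendsto (fun s : ℝ => log (cosh (a * s))) Filter.atBot Filter.atTop :=
      Real.tendsto_log_atTop.comp (hcoshBot.comp hmul)
    have : Filter.Tendsto (fun s : ℝ => - log (cosh (a * s))) Filter.atBot Filter.atBot :=
      Filter.tendsto_neg_atTop_atBot.comp hlog
    exact this.congr fun s => (hzw s).symm
end

section
/- Let c > 0 and p(s) = -√(c+1)·tanh(√(c+1)·s). Since √(c+1) > 1, the set where |p(s)| ≤ 1 is a bounded symmetric interval [-M, M] with (c+1)·tanh²(√(c+1)M) = 1. On (-M, M), z(s) = -log(cosh(√(c+1)s)) is bounded with a unique maximum at s = 0, and y'(s) = (1/cosh(√(c+1)s))·√(1 - (c+1)tanh²(√(c+1)s)) satisfies y'(±M) = 0 while |z'(±M)| = 1. -/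
/-!
With `a = √(c+1) > 1`, `|p s| ≤ 1` means `|tanh (a s)| ≤ 1/a`. Since `tanh` is a strictly
increasing odd bijection onto `(-1, 1)`, this cuts out `|s| ≤ M := artanh (1/a) / a`, and at the
endpoints `(c+1) tanh² (a M) = a² (1/a)² = 1`, which kills the square root in `y'`.
Finally `z = -log cosh (a s) ≤ 0` with equality only at `s = 0`, and `|z|` increases with `|s|`.
-/

open Real

namespace Real

theorem tanh_strictMono : StrictMono tanh := fun x y hxy =>
  lt_of_not_ge fun hyx => hxy.not_ge <| by
    simpa only [artanh_tanh] using
      artanh_le_artanh (neg_one_lt_tanh y) (tanh_lt_one x) hyx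

theorem abs_tanh_le_tanh_iff (x t : ℝ) : |tanh x| ≤ tanh t ↔ |x| ≤ t := by
  rw [abs_le, abs_le, ← tanh_neg, tanh_strictMono.le_iff_le, tanh_strictMono.le_iff_le]

end Real

section

variable {a : ℝ}

theorem tanh_mul_artanh_inv_div (ha : 1 < a) : tanh (a * (artanh a⁻¹ / a)) = a⁻¹ := by
  have ha0 : 0 < a := by linarith
  rw [mul_div_cancel₀ _ ha0.ne']
  exact tanh_artanh ⟨by linarith [inv_pos.2 ha0], inv_lt_one_of_one_lt₀ ha⟩

theorem abs_mul_tanh_mul_le_one_iff (ha : 1 < a) (s : ℝ) :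
    |a * tanh (a * s)| ≤ 1 ↔ |s| ≤ artanh a⁻¹ / a := by
  have ha0 : 0 < a := by linarith
  calc |a * tanh (a * s)| ≤ 1 ↔ |tanh (a * s)| ≤ tanh (a * (artanh a⁻¹ / a)) := by
        rw [tanh_mul_artanh_inv_div ha, abs_mul, abs_of_pos ha0, ← le_div_iff₀' ha0, one_div]
    _ ↔ |a * s| ≤ a * (artanh a⁻¹ / a) := abs_tanh_le_tanh_iff _ _
    _ ↔ |s| ≤ artanh a⁻¹ / a := by rw [abs_mul, abs_of_pos ha0, mul_le_mul_iff_of_pos_left ha0]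

end

theorem stmt_13 (c : ℝ) (hc : 0 < c) (p z : ℝ → ℝ)
    (hp : ∀ s, p s = - sqrt (c + 1) * tanh (sqrt (c + 1) * s))
    (hz : ∀ s, z s = - log (cosh (sqrt (c + 1) * s))) :
    ∃ M > (0:ℝ), (c + 1) * tanh (sqrt (c + 1) * M) ^ 2 = 1 ∧
      {s : ℝ | |p s| ≤ 1} = Set.Icc (-M) M ∧
      (∃ C, ∀ s ∈ Set.Ioo (-M) M, |z s| ≤ C) ∧
      (∀ s ∈ Set.Ioo (-M) M, s ≠ 0 → z s < z 0) ∧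
      (1 / cosh (sqrt (c + 1) * M)) * sqrt (1 - (c + 1) * tanh (sqrt (c + 1) * M) ^ 2) = 0 ∧
      (1 / cosh (sqrt (c + 1) * (-M))) * sqrt (1 - (c + 1) * tanh (sqrt (c + 1) * (-M)) ^ 2) = 0 ∧
      |p M| = 1 ∧ |p (-M)| = 1 := by
  set a := sqrt (c + 1)
  have ha_sq : a ^ 2 = c + 1 := sq_sqrt (by linarith)
  have ha : 1 < a := lt_sqrt_of_sq_lt (by linarith)
  have ha0 : 0 < a := by linarith
  set M := artanh a⁻¹ / a
  have hM : 0 < M := div_pos (artanh_pos ⟨inv_pos.2 ha0, inv_lt_one_of_one_lt₀ ha⟩) ha0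
  have h_endpoint : (c + 1) * tanh (a * M) ^ 2 = 1 := by
    rw [tanh_mul_artanh_inv_div ha, ← ha_sq]
    field_simp
  have h_endpoint_neg : (c + 1) * tanh (a * -M) ^ 2 = 1 := by
    rwa [mul_neg, tanh_neg, neg_sq]
  have h_abs_p_M : |p M| = 1 := by
    rw [hp, neg_mul, abs_neg, tanh_mul_artanh_inv_div ha, mul_inv_cancel₀ ha0.ne', abs_one]
  refine ⟨M, hM, h_endpoint, ?_, ⟨log (cosh (a * M)), fun s hs => ?_⟩, fun s _ hs => ?_,
    by rw [h_endpoint, sub_self, sqrt_zero, mul_zero],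
    by rw [h_endpoint_neg, sub_self, sqrt_zero, mul_zero], h_abs_p_M, ?_⟩
  · ext s
    rw [Set.mem_ofPred_eq, hp, neg_mul, abs_neg, abs_mul_tanh_mul_le_one_iff ha, Set.mem_Icc,
      abs_le]
  · rw [hz, abs_neg, abs_of_nonneg (log_nonneg (one_le_cosh _))]
    refine log_le_log (cosh_pos _) (cosh_le_cosh.2 ?_)
    rw [abs_mul, abs_mul, abs_of_pos hM]
    exact mul_le_mul_of_nonneg_left (abs_le.2 ⟨hs.1.le, hs.2.le⟩) (abs_nonneg a)
  · rw [hz, hz, mul_zero, cosh_zero, log_one, neg_zero, neg_lt_zero]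
    exact log_pos (one_lt_cosh.2 (mul_ne_zero ha0.ne' hs))
  · rwa [hp, mul_neg, tanh_neg, mul_neg, abs_neg, ← hp]
end

section
/- Let m ∈ (-2, -1), z(s) = -(1/(m+1))·log(cosh((m+1)s)), and y'(s) = (cosh((m+1)s))^{-(m+2)/(m+1)}. Then y'(s) ≥ 1 for all s (since the exponent -(m+2)/(m+1) is positive and cosh ≥ 1), so y : ℝ → ℝ is a strictly increasing surjection; moreover z has a unique minimum at s = 0 and z(s) → ∞ as s → ±∞. Hence the generating curve is a graph z = z(y) defined on all of ℝ with a single minimum. -/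
open Real Filter

lemma cosh_tendsto_atTop_s16 : Tendsto Real.cosh atTop atTop := by
  apply tendsto_atTop_mono (fun x => ?_) (tendsto_exp_atTop.atTop_div_const two_pos)
  rw [Real.cosh_eq]
  have := (Real.exp_pos (-x)).le
  linarith

theorem stmt_16 (m : ℝ) (hm : m ∈ Set.Ioo (-2 : ℝ) (-1)) (z yd : ℝ → ℝ)
    (hz : ∀ s, z s = -(1 / (m + 1)) * log (cosh ((m + 1) * s)))
    (hyd : ∀ s, yd s = cosh ((m + 1) * s) ^ (-(m + 2) / (m + 1))) :
    (∀ s, 1 ≤ yd s) ∧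
    (∀ y : ℝ → ℝ, (∀ s, HasDerivAt y (yd s) s) → StrictMono y ∧ Function.Surjective y) ∧
    (∀ s, s ≠ 0 → z 0 < z s) ∧
    Filter.Tendsto z Filter.atTop Filter.atTop ∧
    Filter.Tendsto z Filter.atBot Filter.atTop := by
  obtain ⟨hm2, hm1⟩ := hm
  have hm1' : m + 1 < 0 := by linarith
  have hm2' : 0 < m + 2 := by linarith
  have hexp : (0:ℝ) ≤ -(m + 2) / (m + 1) := by
    rw [neg_div]
    exact (neg_nonneg).2 (div_nonpos_of_nonneg_of_nonpos hm2'.le hm1'.le)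
  have hyd1 : ∀ s, 1 ≤ yd s := fun s => by
    rw [hyd]; exact Real.one_le_rpow (Real.one_le_cosh _) hexp
  have hc : 0 < -(1 / (m + 1)) := by
    rw [neg_pos]; exact div_neg_of_pos_of_neg one_pos hm1'
  have hz0 : z 0 = 0 := by simp [hz]
  -- tendsto of z
  have habs : ∀ (l : Filter ℝ), Tendsto (fun s : ℝ => |s|) l atTop →
      Tendsto z l atTop := by
    intro l hl
    have h2 : Tendsto (fun s => Real.cosh ((m + 1) * s)) l atTop := by
      have h1 : Tendsto (fun s : ℝ => |m + 1| * |s|) l atTop :=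
        hl.const_mul_atTop (abs_pos.2 (by linarith))
      have := cosh_tendsto_atTop_s16.comp h1
      refine this.congr fun s => ?_
      simp only [Function.comp, ← abs_mul, Real.cosh_abs]
    have h3 := (Real.tendsto_log_atTop.comp h2).const_mul_atTop hc
    refine h3.congr fun s => ?_
    simp [hz, Function.comp]
  have habsTop : Tendsto (fun s : ℝ => |s|) atTop atTop := tendsto_abs_atTop_atTop
  have habsBot : Tendsto (fun s : ℝ => |s|) atBot atTop := tendsto_abs_atBot_atTop
  refine ⟨hyd1, ?_, ?_, habs _ habsTop, habs _ habsBot⟩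
  · intro y hy
    have hdiff : Differentiable ℝ y := fun s => (hy s).differentiableAt
    have hmono : StrictMono y := by
      apply strictMono_of_deriv_pos
      intro x
      rw [(hy x).deriv]
      exact lt_of_lt_of_le one_pos (hyd1 x)
    refine ⟨hmono, ?_⟩
    have hg : ∀ s, HasDerivAt (fun t => y t - t) (yd s - 1) s := fun s =>
      (hy s).sub (hasDerivAt_id s)
    have hgmono : Monotone (fun t => y t - t) :=
      monotone_of_deriv_nonneg (fun s => (hg s).differentiableAt)
        (fun x => by rw [(hg x).deriv]; linarith [hyd1 x])
    have htop : Tendsto y atTop atTop := by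
      refine tendsto_atTop_mono' _ ?_ (tendsto_atTop_add_const_right _ (y 0) tendsto_id)
      filter_upwards [eventually_ge_atTop (0:ℝ)] with x hx
      have := hgmono hx
      simp only at this
      simp only [id]
      linarith
    have hbot : Tendsto y atBot atBot := by
      refine tendsto_atBot_mono' _ ?_ (tendsto_atBot_add_const_right _ (y 0) tendsto_id)
      filter_upwards [eventually_le_atBot (0:ℝ)] with x hx
      have := hgmono hx
      simp only at this
      simp only [id]
      linarith
    exact hdiff.continuous.surjective htop hbot
  · intro s hs
    rw [hz0, hz]
    apply mul_pos hc
    exact Real.log_pos (Real.one_lt_cosh.2 (mul_ne_zero (by linarith) hs))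
end
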